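/- Let f = φ_{μ,σ} be the normal density with mean μ and variance σ², and t(x) = (x, x²). Then the bias factor f'' − f·g₂ vanishes identically, where g₂(x) = (0,2) Σ⁻¹ ((x−μ, x²−(σ²+μ²))ᵀ) and Σ is the covariance matrix of (X, X²) for X ~ N(μ, σ²). -/

import Mathlib

open Matrix Real

/-- The normal density with mean μ and standard deviation σ. -/
noncomputable def normalPdf (μ σ x : ℝ) : ℝ :=
  (Real.sqrt (2 * Real.pi * σ ^ 2))⁻¹ * Real.exp (-(x - μ) ^ 2 / (2 * σ ^ 2))

/-- The covariance matrix of (X, X²) for X ~ N(μ, σ²). -/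
noncomputable def covXX2 (μ σ : ℝ) : Matrix (Fin 2) (Fin 2) ℝ :=
  !![σ ^ 2, 2 * μ * σ ^ 2; 2 * μ * σ ^ 2, 4 * μ ^ 2 * σ ^ 2 + 2 * σ ^ 4]

/-!
Both sides of the bias factor are `φ` times the second Hermite polynomial `((x - μ)² - σ²) / σ⁴`.
Differentiating `φ' = -φ (x - μ) / σ²` once more gives `φ'' = φ ((x - μ)² / σ⁴ - 1 / σ²)`; and since
`det Σ = 2σ⁶`, the second row of `Σ⁻¹` is `(-μ / σ⁴, 1 / (2σ⁴))`, which turns `g₂(x)` into the same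
polynomial.
-/

lemma hasDerivAt_normalPdf (μ σ x : ℝ) :
    HasDerivAt (normalPdf μ σ) (normalPdf μ σ x * (-(x - μ) / σ ^ 2)) x := by
  have hexponent : HasDerivAt (fun x : ℝ => -(x - μ) ^ 2 / (2 * σ ^ 2)) (-(x - μ) / σ ^ 2) x := by
    refine ((((hasDerivAt_id x).sub_const μ).pow 2).neg.div_const (2 * σ ^ 2)).congr_deriv ?_
    simp only [id]
    ring
  refine (hexponent.exp.const_mul (Real.sqrt (2 * Real.pi * σ ^ 2))⁻¹).congr_deriv ?_
  rw [normalPdf]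
  ring

lemma deriv_normalPdf (μ σ : ℝ) :
    deriv (normalPdf μ σ) = fun x => normalPdf μ σ x * (-(x - μ) / σ ^ 2) :=
  funext fun x => (hasDerivAt_normalPdf μ σ x).deriv

lemma deriv_deriv_normalPdf (μ σ x : ℝ) :
    deriv (deriv (normalPdf μ σ)) x = normalPdf μ σ x * ((x - μ) ^ 2 / σ ^ 4 - 1 / σ ^ 2) := by
  have hfactor : HasDerivAt (fun x : ℝ => -(x - μ) / σ ^ 2) (-1 / σ ^ 2) x :=
    ((hasDerivAt_id x).sub_const μ).neg.div_const (σ ^ 2)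
  rw [deriv_normalPdf, ((hasDerivAt_normalPdf μ σ x).fun_mul hfactor).deriv]
  ring

lemma covXX2_inv (μ : ℝ) {σ : ℝ} (hσ : σ ≠ 0) :
    (covXX2 μ σ)⁻¹ =
      !![(2 * μ ^ 2 + σ ^ 2) / σ ^ 4, -μ / σ ^ 4; -μ / σ ^ 4, 1 / (2 * σ ^ 4)] := by
  refine inv_eq_right_inv ?_
  rw [covXX2, mul_fin_two, one_fin_two]
  ext i j
  fin_cases i <;> fin_cases j <;>
    simp only [Fin.zero_eta, Fin.mk_one, of_apply, cons_val_zero, cons_val_one] <;> field_simp <;> ring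

/-- for the normal density f = φ_{μ,σ} and t(x) = (x, x²), the
bias factor f'' − f·g₂ vanishes identically, where
g₂(x) = (0,2) Σ⁻¹ (x−μ, x²−(σ²+μ²))ᵀ and Σ = Cov(X, X²). -/
theorem normal_bias_factor_vanishes (μ σ : ℝ) (hσ : 0 < σ) :
    ∀ x : ℝ,
      deriv (deriv (normalPdf μ σ)) x
        - normalPdf μ σ x *
            (2 * (((covXX2 μ σ)⁻¹ 1 0) * (x - μ)
              + ((covXX2 μ σ)⁻¹ 1 1) * (x ^ 2 - (σ ^ 2 + μ ^ 2)))) = 0 := by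
  intro x
  rw [deriv_deriv_normalPdf, covXX2_inv μ hσ.ne']
  simp only [of_apply, cons_val_one, cons_val_zero]
  field_simp
  ring
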